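/- arXiv:0809.2735 — 2 statements merged into one kernel-verified Lean document; each statement's English description precedes it below -/
import Mathlib

section
/- The curve z(s) = (cos(sμ) + i(B/μ)sin(sμ))e^{−iBs}, w(s) = ((C+iD)/μ)sin(sμ)e^{iBs}, μ = √(B²+C²+D²), is horizontal: Im(z̄ ż) + Im(w ẇ̄) = 0 for all s, equivalently −x₂ẋ₁+x₁ẋ₂+x₄ẋ₃−x₃ẋ₄ = 0 where z = x₁+ix₂, w = x₃+ix₄. -/
/-!
Write `z = f e^{-iBs}` and `w = g e^{iBs}`. A unimodular phase `e^{iθs}` changes `Im(ū u')`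
only by `θ |u|²`, so with `a = B/μ` and `c = (C + iD)/μ` the horizontality form equals
`μ a - B cos² - B (a² + |c|²) sin²`, which vanishes because `μ a = B` and `B (a² + |c|²) = B`.
Both hold also in the degenerate case `μ = 0`, where `B = 0` and the junk quotients are `0`.
-/

open Complex ComplexConjugate

section
variable {f : ℝ → ℂ} {f' : ℂ} {s : ℝ}

theorem HasDerivAt.mul_cexp_I_mul (hf : HasDerivAt f f' s) (θ : ℝ) :
    HasDerivAt (fun t : ℝ => f t * cexp (I * θ * t))
      ((f' + I * θ * f s) * cexp (I * θ * s)) s := by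
  have he : HasDerivAt (fun t : ℝ => cexp (I * θ * t)) (cexp (I * θ * s) * (I * θ)) s := by
    simpa using ((hasDerivAt_id s).ofReal_comp.const_mul (I * θ)).cexp
  exact (hf.mul he).congr_deriv (by ring)

theorem conj_mul_cexp_I_mul_mul (x y : ℂ) (θ r : ℝ) :
    conj (x * cexp (I * θ * r)) * (y * cexp (I * θ * r)) = conj x * y := by
  have h : conj (cexp (I * θ * r)) * cexp (I * θ * r) = 1 := by
    rw [← normSq_eq_conj_mul_self, normSq_eq_norm_sq,
      show I * θ * r = ((θ * r : ℝ) : ℂ) * I by push_cast; ring, norm_exp_ofReal_mul_I]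
    simp
  rw [map_mul]
  linear_combination (conj x * y) * h

theorem im_conj_mul_deriv_mul_cexp (hf : HasDerivAt f f' s) (θ : ℝ) :
    (conj (f s * cexp (I * θ * s)) * deriv (fun t : ℝ => f t * cexp (I * θ * t)) s).im
      = (conj (f s) * f').im + θ * normSq (f s) := by
  rw [(hf.mul_cexp_I_mul θ).deriv, conj_mul_cexp_I_mul_mul, mul_add, add_im,
    mul_left_comm, ← normSq_eq_conj_mul_self]
  simp
end

theorem hasDerivAt_cos_add_I_mul_sin (μ a s : ℝ) :
    HasDerivAt (fun t : ℝ => cos (t * μ) + I * a * sin (t * μ))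
      (μ * (-sin (s * μ) + I * a * cos (s * μ))) s := by
  have h := (hasDerivAt_id (s : ℂ)).mul_const (μ : ℂ)
  exact (h.ccos.add (h.csin.const_mul (I * a))).comp_ofReal.congr_deriv (by simp only [id]; ring)

theorem im_conj_cos_add_I_mul_sin_mul (μ a s : ℝ) :
    (conj (cos (s * μ) + I * a * sin (s * μ)) * (μ * (-sin (s * μ) + I * a * cos (s * μ)))).im
      = μ * a := by
  rw [← ofReal_mul, ← ofReal_cos, ← ofReal_sin]
  simp only [map_add, map_mul, conj_ofReal, conj_I, mul_im, mul_re, add_re, add_im, neg_re,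
    neg_im, ofReal_re, ofReal_im, I_re, I_im]
  linear_combination μ * a * Real.sin_sq_add_cos_sq (s * μ)

theorem normSq_cos_add_I_mul_sin (μ a s : ℝ) :
    normSq (cos (s * μ) + I * a * sin (s * μ))
      = Real.cos (s * μ) ^ 2 + a ^ 2 * Real.sin (s * μ) ^ 2 := by
  rw [← ofReal_mul, ← ofReal_cos, ← ofReal_sin, normSq_apply]
  simp only [add_re, add_im, mul_re, mul_im, I_re, I_im, ofReal_re, ofReal_im]
  ring

theorem hasDerivAt_mul_sin (μ s : ℝ) (c : ℂ) :
    HasDerivAt (fun t : ℝ => c * sin (t * μ)) (c * (μ * cos (s * μ))) s := by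
  have h := (hasDerivAt_id (s : ℂ)).mul_const (μ : ℂ)
  exact (h.csin.const_mul c).comp_ofReal.congr_deriv (by simp only [id]; ring)

theorem im_conj_mul_sin_mul (μ s : ℝ) (c : ℂ) :
    (conj (c * sin (s * μ)) * (c * (μ * cos (s * μ)))).im = 0 := by
  rw [← ofReal_mul, ← ofReal_cos, ← ofReal_sin, map_mul, conj_ofReal,
    show conj c * (Real.sin (s * μ) : ℂ) * (c * (μ * Real.cos (s * μ)))
      = ((normSq c * Real.sin (s * μ) * μ * Real.cos (s * μ) : ℝ) : ℂ) by
        push_cast; rw [normSq_eq_conj_mul_self]; ring]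
  exact ofReal_im _

theorem normSq_mul_sin (μ s : ℝ) (c : ℂ) :
    normSq (c * sin (s * μ)) = normSq c * Real.sin (s * μ) ^ 2 := by
  rw [normSq_mul, ← ofReal_mul, ← ofReal_sin, normSq_ofReal, sq]

theorem im_mul_conj (x y : ℂ) : (x * conj y).im = -(conj x * y).im := by
  rw [← conj_im, map_mul, conj_conj]

theorem geodesic_horizontal_identity (B C D μ : ℝ) (hμ : μ ^ 2 = B ^ 2 + C ^ 2 + D ^ 2)
    (x y : ℝ) (hxy : y ^ 2 + x ^ 2 = 1) :
    μ * (B / μ) - B * (x ^ 2 + (B / μ) ^ 2 * y ^ 2)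
      - B * ((C ^ 2 + D ^ 2) / μ ^ 2 * y ^ 2) = 0 := by
  rcases eq_or_ne μ 0 with rfl | hμ0
  · obtain rfl : B = 0 := by nlinarith [sq_nonneg B, sq_nonneg C, sq_nonneg D]
    simp
  · field_simp
    linear_combination B * y ^ 2 * hμ - B * μ ^ 2 * hxy

theorem geodesic_horizontal_general (B C D : ℝ) :
    let μ : ℝ := Real.sqrt (B^2 + C^2 + D^2)
    let z : ℝ → ℂ := fun s =>
      (Complex.cos (s * μ) + Complex.I * (B / μ) * Complex.sin (s * μ))
        * Complex.exp (-Complex.I * B * s)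
    let w : ℝ → ℂ := fun s =>
      ((C : ℂ) + Complex.I * D) / μ * Complex.sin (s * μ)
        * Complex.exp (Complex.I * B * s)
    ∀ s : ℝ, ((starRingEnd ℂ) (z s) * deriv z s).im
      + (w s * (starRingEnd ℂ) (deriv w s)).im = 0 := by
  intro μ z w s
  have hz : z = fun t : ℝ =>
      (cos (t * μ) + I * ↑(B / μ) * sin (t * μ)) * cexp (I * ↑(-B) * t) := by
    funext t; simp only [z]; push_cast; ring_nf
  have hz_im := im_conj_mul_deriv_mul_cexp (hasDerivAt_cos_add_I_mul_sin μ (B / μ) s) (-B)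
  have hw_im := im_conj_mul_deriv_mul_cexp (hasDerivAt_mul_sin μ s ((C + I * D) / μ)) B
  have hnormSq : normSq (C + I * D) = C ^ 2 + D ^ 2 := by rw [mul_comm, normSq_add_mul_I]
  rw [im_conj_cos_add_I_mul_sin_mul, normSq_cos_add_I_mul_sin] at hz_im
  rw [im_conj_mul_sin_mul, normSq_mul_sin, normSq_div, normSq_ofReal, hnormSq] at hw_im
  rw [im_mul_conj, hz]
  beta_reduce at hz_im hw_im ⊢
  rw [hz_im, hw_im]
  linear_combination geodesic_horizontal_identity B C D μ (Real.sq_sqrt (by positivity)) _ _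
    (Real.sin_sq_add_cos_sq (s * μ))

/-- The geodesics are horizontal curves: Im(z̄ż) + Im(wẇ̄) = 0. -/
theorem geodesic_horizontal (B C D : ℝ) (hCD : ¬(C = 0 ∧ D = 0)) :
    let μ : ℝ := Real.sqrt (B^2 + C^2 + D^2)
    let z : ℝ → ℂ := fun s =>
      (Complex.cos (s * μ) + Complex.I * (B / μ) * Complex.sin (s * μ))
        * Complex.exp (-Complex.I * B * s)
    let w : ℝ → ℂ := fun s =>
      ((C : ℂ) + Complex.I * D) / μ * Complex.sin (s * μ)
        * Complex.exp (Complex.I * B * s)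
    ∀ s : ℝ, ((starRingEnd ℂ) (z s) * deriv z s).im
      + (w s * (starRingEnd ℂ) (deriv w s)).im = 0 :=
  geodesic_horizontal_general B C D
end

section
/- Fix ω ∈ (−π,0)∪(0,π) and n ∈ ℤ\{0} with (πn)² > ω², and fix C, D with C²+D² = ((πn)²−ω²)/t² for some t > 0. Then the curve z_n(s) = (cos(πns/t) − i(ω/(πn))sin(πns/t))e^{−isω/t}, w_n(s) = (C+iD)(t/(πn))sin(πns/t)e^{isω/t}, s ∈ [0,t], satisfies z_n(0) = 1, w_n(0) = 0, |z_n(t)| = 1 and w_n(t) = 0, so the endpoint lies on the vertical line {(e^{iα},0)}. -/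
/-- The geodesics γₙ join (1,0) to a point of the vertical line {(e^{iα},0)}. -/
theorem geodesics_to_vertical_line (ω : ℝ) (n : ℤ) (t C D : ℝ)
    (hω : ω ∈ Set.Ioo (-Real.pi) 0 ∪ Set.Ioo 0 Real.pi)
    (hn : n ≠ 0) (hnω : (Real.pi * n)^2 > ω^2) (ht : 0 < t)
    (hCD : C^2 + D^2 = ((Real.pi * n)^2 - ω^2) / t^2) :
    let z : ℝ → ℂ := fun s =>
      (Complex.cos (Real.pi * n * s / t)
        - Complex.I * (ω / (Real.pi * n)) * Complex.sin (Real.pi * n * s / t))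
        * Complex.exp (-Complex.I * (s * ω / t))
    let w : ℝ → ℂ := fun s =>
      ((C : ℂ) + Complex.I * D) * (t / (Real.pi * n))
        * Complex.sin (Real.pi * n * s / t) * Complex.exp (Complex.I * (s * ω / t))
    z 0 = 1 ∧ w 0 = 0 ∧ ‖z t‖ = 1 ∧ w t = 0 := by
  intro z w
  have htt : (Real.pi : ℂ) * n * t / t = n * Real.pi := by
    field_simp [ht.ne']
  have hsin : Complex.sin (Real.pi * n * t / t) = 0 := by
    rw [htt, Complex.sin_int_mul_pi]
  refine ⟨?_, ?_, ?_, ?_⟩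
  · simp [z]
  · simp [w]
  · have hsin2 : Complex.sin (((n * Real.pi : ℝ) : ℂ)) = 0 := by
      rw [← Complex.ofReal_sin]
      exact_mod_cast congrArg Complex.ofReal (Real.sin_int_mul_pi n)
    simp only [z, htt]
    rw [show ((n:ℂ) * Real.pi) = ((n * Real.pi : ℝ) : ℂ) by push_cast; ring,
      hsin2, mul_zero, sub_zero,
      ← Complex.ofReal_cos, norm_mul, Complex.norm_real, Real.norm_eq_abs, Complex.norm_exp]
    have h2 : (-Complex.I * ((t:ℂ) * ω / t)).re = 0 := by
      simp [Complex.div_re, Complex.mul_re]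
    rw [h2, Real.exp_zero, mul_one, Real.abs_cos_int_mul_pi]
  · simp [w, hsin]
end
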